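/- Suppose 2ζ > σ > ζ > 0 and c > 0 satisfies σ·tanh(σc) + ζ·tanh(ζc) = σ - ζ. Then (σ - ζ)·c - log(cosh(σc)) - log(cosh(ζc)) ≥ c²σ²·C, where C = (1/(c_ub²σ²))·[σc_lb·tanh(σc_lb) - log cosh(σc_lb) + ζc_lb·tanh(ζc_lb) - log cosh(ζc_lb)] > 0, with c_lb = (1/σ)·artanh(1/2 - ζ/(2σ)) and c_ub = (1/ζ)·artanh(σ/(2ζ) - 1/2). -/

import Mathlib

/-!
Write `g x = x tanh x - log cosh x`. Substituting the equation for `c` turns the left-hand side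
into `g (σ c) + g (ζ c)`. Comparing `tanh (σ c)` and `tanh (ζ c)` in that equation traps `c`
between `c_lb` and `c_ub`, and `g' x = x / cosh² x` makes `g` increasing on `[0, ∞)`, so the
left-hand side is at least `g (σ c_lb) + g (ζ c_lb) = c_ub² σ² C ≥ c² σ² C`.
-/

/-- The inverse hyperbolic tangent. -/
noncomputable def artanh (x : ℝ) : ℝ := (1 / 2) * Real.log ((1 + x) / (1 - x))

theorem Real.tanh_strictMono : StrictMono Real.tanh := by
  intro a b hab
  by_contra! h
  have := Real.artanh_le_artanh (Real.neg_one_lt_tanh b) (Real.tanh_lt_one a) h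
  rw [Real.artanh_tanh, Real.artanh_tanh] at this
  linarith

theorem Real.hasDerivAt_tanh (x : ℝ) : HasDerivAt Real.tanh (1 / Real.cosh x ^ 2) x := by
  have h := (Real.hasDerivAt_sinh x).div (Real.hasDerivAt_cosh x) (Real.cosh_pos x).ne'
  rw [show Real.sinh / Real.cosh = Real.tanh from
    funext fun y => (Real.tanh_eq_sinh_div_cosh y).symm] at h
  refine h.congr_deriv ?_
  rw [← Real.cosh_sq_sub_sinh_sq x]
  ring

theorem artanh_eq_real_artanh {y : ℝ} (hy : y ∈ Set.Icc (-1) 1) : artanh y = Real.artanh y :=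
  (Real.artanh_eq_half_log hy).symm

theorem artanh_pos {y : ℝ} (h0 : 0 < y) (h1 : y < 1) : 0 < artanh y := by
  rw [artanh_eq_real_artanh ⟨by linarith, h1.le⟩]
  exact Real.artanh_pos ⟨h0, h1⟩

theorem artanh_le_of_le_tanh {x y : ℝ} (hy : -1 < y) (h : y ≤ Real.tanh x) : artanh y ≤ x := by
  have hy1 : y < 1 := h.trans_lt (Real.tanh_lt_one x)
  rw [artanh_eq_real_artanh ⟨hy.le, hy1.le⟩, ← Real.artanh_tanh x]
  exact Real.artanh_le_artanh hy (Real.tanh_lt_one x) h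

theorem le_artanh_of_tanh_le {x y : ℝ} (hy : y < 1) (h : Real.tanh x ≤ y) : x ≤ artanh y := by
  have hy1 : -1 < y := (Real.neg_one_lt_tanh x).trans_le h
  rw [artanh_eq_real_artanh ⟨hy1.le, hy.le⟩, ← Real.artanh_tanh x]
  exact Real.artanh_le_artanh (Real.neg_one_lt_tanh x) hy h

noncomputable def mulTanhSubLogCosh (x : ℝ) : ℝ := x * Real.tanh x - Real.log (Real.cosh x)

theorem hasDerivAt_mulTanhSubLogCosh (x : ℝ) :
    HasDerivAt mulTanhSubLogCosh (x / Real.cosh x ^ 2) x := by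
  have h := ((hasDerivAt_id' x).mul (Real.hasDerivAt_tanh x)).sub
    ((Real.hasDerivAt_cosh x).log (Real.cosh_pos x).ne')
  refine h.congr_deriv ?_
  have := (Real.cosh_pos x).ne'
  rw [Real.tanh_eq_sinh_div_cosh]
  field_simp
  ring

theorem strictMonoOn_mulTanhSubLogCosh : StrictMonoOn mulTanhSubLogCosh (Set.Ici 0) := by
  refine strictMonoOn_of_deriv_pos (convex_Ici 0)
    (fun x _ => (hasDerivAt_mulTanhSubLogCosh x).continuousAt.continuousWithinAt) fun x hx => ?_
  rw [interior_Ici] at hx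
  rw [(hasDerivAt_mulTanhSubLogCosh x).deriv]
  exact div_pos hx (by positivity)

theorem mulTanhSubLogCosh_pos {x : ℝ} (hx : 0 < x) : 0 < mulTanhSubLogCosh x := by
  simpa [mulTanhSubLogCosh] using
    strictMonoOn_mulTanhSubLogCosh Set.self_mem_Ici (Set.mem_Ici.2 hx.le) hx

section BoundsOnC

variable {σ ζ c : ℝ}

theorem mul_tanh_mul_le_mul_tanh_mul (hζ : 0 ≤ ζ) (hζσ : ζ ≤ σ) (hc : 0 ≤ c) :
    ζ * Real.tanh (ζ * c) ≤ σ * Real.tanh (σ * c) := by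
  have hζc : 0 ≤ Real.tanh (ζ * c) := by
    simpa using Real.tanh_strictMono.monotone (by positivity : 0 ≤ ζ * c)
  exact mul_le_mul hζσ (Real.tanh_strictMono.monotone (by nlinarith)) hζc (hζ.trans hζσ)

theorem artanh_div_le_of_tanh_eq (hζ : 0 < ζ) (hζσ : ζ ≤ σ) (hc : 0 ≤ c)
    (heq : σ * Real.tanh (σ * c) + ζ * Real.tanh (ζ * c) = σ - ζ) :
    (1 / σ) * artanh (1 / 2 - ζ / (2 * σ)) ≤ c := by
  have hσ : 0 < σ := hζ.trans_le hζσ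
  have htanh : 1 / 2 - ζ / (2 * σ) ≤ Real.tanh (σ * c) := by
    rw [show 1 / 2 - ζ / (2 * σ) = (σ - ζ) / (2 * σ) by field_simp, div_le_iff₀ (by positivity)]
    linarith [mul_tanh_mul_le_mul_tanh_mul hζ.le hζσ hc]
  have hy : -1 < 1 / 2 - ζ / (2 * σ) := by
    have : ζ / (2 * σ) ≤ 1 / 2 := by rw [div_le_iff₀ (by positivity)]; linarith
    linarith
  rw [one_div_mul_eq_div, div_le_iff₀' hσ]
  exact artanh_le_of_le_tanh hy htanh

theorem le_artanh_div_of_tanh_eq (hζ : 0 < ζ) (hζσ : ζ ≤ σ) (hσ : σ < 3 * ζ) (hc : 0 ≤ c)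
    (heq : σ * Real.tanh (σ * c) + ζ * Real.tanh (ζ * c) = σ - ζ) :
    c ≤ (1 / ζ) * artanh (σ / (2 * ζ) - 1 / 2) := by
  have htanh : Real.tanh (ζ * c) ≤ σ / (2 * ζ) - 1 / 2 := by
    rw [show σ / (2 * ζ) - 1 / 2 = (σ - ζ) / (2 * ζ) by field_simp, le_div_iff₀ (by positivity)]
    linarith [mul_tanh_mul_le_mul_tanh_mul hζ.le hζσ hc]
  have hy : σ / (2 * ζ) - 1 / 2 < 1 := by
    have : σ / (2 * ζ) < 3 / 2 := by rw [div_lt_iff₀ (by positivity)]; linarith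
    linarith
  rw [one_div_mul_eq_div, le_div_iff₀' hζ]
  exact le_artanh_of_tanh_le hy htanh

theorem one_div_mul_artanh_pos (hζ : 0 < ζ) (hζσ : ζ < σ) :
    0 < (1 / σ) * artanh (1 / 2 - ζ / (2 * σ)) := by
  have hσ : 0 < σ := hζ.trans hζσ
  have hy_pos : 0 < 1 / 2 - ζ / (2 * σ) := by rw [sub_pos, div_lt_iff₀ (by positivity)]; linarith
  have hy_lt : 1 / 2 - ζ / (2 * σ) < 1 := by linarith [div_pos hζ (by positivity : 0 < 2 * σ)]
  exact mul_pos (by positivity) (artanh_pos hy_pos hy_lt)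

end BoundsOnC

theorem gap_lower_bound (σ ζ c : ℝ) (hζ : 0 < ζ) (hζσ : ζ < σ) (hσ : σ < 2 * ζ)
    (hc : 0 < c)
    (heq : σ * Real.tanh (σ * c) + ζ * Real.tanh (ζ * c) = σ - ζ) :
    let clb := (1 / σ) * artanh (1 / 2 - ζ / (2 * σ))
    let cub := (1 / ζ) * artanh (σ / (2 * ζ) - 1 / 2)
    let C := (1 / (cub ^ 2 * σ ^ 2)) *
      (σ * clb * Real.tanh (σ * clb) - Real.log (Real.cosh (σ * clb))
        + ζ * clb * Real.tanh (ζ * clb) - Real.log (Real.cosh (ζ * clb)))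
    0 < C ∧
      (σ - ζ) * c - Real.log (Real.cosh (σ * c)) - Real.log (Real.cosh (ζ * c))
        ≥ c ^ 2 * σ ^ 2 * C := by
  intro clb cub C
  set g := mulTanhSubLogCosh
  have hσ0 : 0 < σ := hζ.trans hζσ
  have hclb_le : clb ≤ c := artanh_div_le_of_tanh_eq hζ hζσ.le hc.le heq
  have hle_cub : c ≤ cub := le_artanh_div_of_tanh_eq hζ hζσ.le (by linarith) hc.le heq
  have hclb : 0 < clb := one_div_mul_artanh_pos hζ hζσ
  have hC : C = (g (σ * clb) + g (ζ * clb)) / (cub ^ 2 * σ ^ 2) := by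
    simp only [C, g, mulTanhSubLogCosh]; ring
  have hcub : 0 < cub := hc.trans_le hle_cub
  have hG : 0 < g (σ * clb) + g (ζ * clb) :=
    add_pos (mulTanhSubLogCosh_pos (by positivity)) (mulTanhSubLogCosh_pos (by positivity))
  have hCpos : 0 < C := by rw [hC]; positivity
  have hg_mono {a : ℝ} (ha : 0 < a) : g (a * clb) ≤ g (a * c) :=
    strictMonoOn_mulTanhSubLogCosh.monotoneOn (Set.mem_Ici.2 (by positivity))
      (Set.mem_Ici.2 (by positivity)) (mul_le_mul_of_nonneg_left hclb_le ha.le)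
  refine ⟨hCpos, ?_⟩
  calc c ^ 2 * σ ^ 2 * C ≤ cub ^ 2 * σ ^ 2 * C := by gcongr
    _ = g (σ * clb) + g (ζ * clb) := by rw [hC]; field_simp
    _ ≤ g (σ * c) + g (ζ * c) := add_le_add (hg_mono hσ0) (hg_mono hζ)
    _ = (σ - ζ) * c - Real.log (Real.cosh (σ * c)) - Real.log (Real.cosh (ζ * c)) := by
      simp only [g, mulTanhSubLogCosh]; rw [← heq]; ring
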